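/- For all nonnegative integers t and n, d(4t+3, 4n) = d(2t+1, 2n) + 1 and d(4t+3, 4n+3) = d(2t+2, 2n+1) − 1, where d(t,n) = r(n+t) − r(n). -/

import Mathlib

/-- `r n` counts indices `j ≥ 0` with the `j`-th and `(j+1)`-st binary digits of `n` both `1`. -/
def r (n : ℕ) : ℕ :=
  ((Finset.range (n + 1)).filter (fun j => n.testBit j ∧ n.testBit (j + 1))).card

/-- `d t n = r (n + t) - r n` as an integer. -/
def d (t n : ℕ) : ℤ := (r (n + t) : ℤ) - (r n : ℤ)

/-! Appending a binary digit `b` to `m` creates a new block `11` exactly when `b` and the last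
digit of `m` are both `1`, so `r (2m) = r m`, `r (2m + 1) = r m + [m odd]`, and hence
`r (4m + 3) = r (2m + 1) + 1`. Both identities follow by splitting
`4n + 4t + 3 = 4(n + t) + 3` and `4n + 3 + 4t + 3 = 2(2(n + t + 1) + 1)`. -/

open Finset Nat

lemma r_eq_sum_range {n N : ℕ} (hN : n < N) :
    r n = ∑ j ∈ range N, if n.testBit j ∧ n.testBit (j + 1) then 1 else 0 := by
  rw [r, card_filter]
  refine sum_subset (range_subset_range.mpr hN) fun j _ hj => ?_
  have : n < 2 ^ j :=
    n.lt_two_pow_self.trans_le (pow_le_pow_right₀ le_add_self (by simp at hj; omega))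
  simp [testBit_eq_false_of_lt this]

lemma r_bit (b : Bool) (m : ℕ) : r (bit b m) = r m + if b ∧ m.testBit 0 then 1 else 0 := by
  have hm : m < bit b m + 1 := by rw [bit_val]; omega
  rw [r_eq_sum_range (by omega : bit b m < bit b m + 1 + 1), sum_range_succ', r_eq_sum_range hm]
  simp only [← succ_eq_add_one, testBit_bit_succ, testBit_bit_zero]

lemma r_two_mul (m : ℕ) : r (2 * m) = r m := by
  simpa [bit_val] using r_bit false m

lemma r_four_mul_add_three (m : ℕ) : r (4 * m + 3) = r (2 * m + 1) + 1 := by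
  have h := r_bit true (bit true m)
  rw [testBit_bit_zero, bit_val, bit_val] at h
  simpa [show 2 * (2 * m + 1) + 1 = 4 * m + 3 by ring] using h

theorem d_rec (t n : ℕ) :
    d (4 * t + 3) (4 * n) = d (2 * t + 1) (2 * n) + 1 ∧
    d (4 * t + 3) (4 * n + 3) = d (2 * t + 2) (2 * n + 1) - 1 := by
  constructor
  · rw [d, d, show 4 * n + (4 * t + 3) = 4 * (n + t) + 3 by ring,
      show 2 * n + (2 * t + 1) = 2 * (n + t) + 1 by ring, show 4 * n = 2 * (2 * n) by ring,
      r_four_mul_add_three, r_two_mul]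
    push_cast
    ring
  · rw [d, d, show 4 * n + 3 + (4 * t + 3) = 2 * (2 * (n + t + 1) + 1) by ring,
      show 2 * n + 1 + (2 * t + 2) = 2 * (n + t + 1) + 1 by ring, r_two_mul, r_four_mul_add_three]
    push_cast
    ring
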